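/- Let n ≥ 1, k ∈ {1,…,n}, and q₁,…,qₙ ∈ ℕ with N = q₁ + ⋯ + qₙ, and suppose that for each residue s ∈ {1,…,k} the sequence j ↦ q_{jk+s} + j (over indices jk + s ≤ n) is strictly increasing. Then the coefficient of ∏_{j=1}^n x_j^{k·q_j + j − 1} in (x₁^k + ⋯ + xₙ^k)^N · ∏_{1 ≤ i < j ≤ n}(x_j − x_i) is a nonzero integer dividing N!. -/

import Mathlib

/-!
Expanding `∏_{i<j} (x_j - x_i) = ∑_σ sgn σ · x^σ` and using the multinomial formula for
`(∑ x_j^k)^N`, the coefficient of `x^d` is `N! · det G`, where `G i j = 1 / ((d_j - i) / k)!`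
if `i ≤ d_j` and `k ∣ d_j - i`, and `0` otherwise. Here `d_j = k q_{j+1} + j` (indices from
`0`), so `d_j ≡ j (mod k)` and `G` is block diagonal along the residue classes mod `k`.
The block of the class `s` is the matrix `(1 / (a_j - i)!)` with `a_j = q_{jk+s+1} + j`; in
the basis of descending factorials its determinant is the Vandermonde determinant of `a`
divided by `∏ a_j!`. When `a` is strictly increasing, the numbers `a_j - a_i` with `i < j` are
distinct elements of `{1, …, a_j}`, so the Vandermonde product divides `∏ a_j!`. Hence
`det G = 1 / T` for a natural number `T`, and the coefficient times `T` is `N!`.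
-/

open MvPolynomial Finset
open Matrix
open scoped Nat

theorem prod_dvd_factorial_of_subset_Ico {s : Finset ℕ} {m : ℕ} (hs : s ⊆ Ico 1 (m + 1)) :
    ∏ x ∈ s, x ∣ m ! := by
  rw [← prod_Ico_id_eq_factorial]
  exact prod_dvd_prod_of_subset _ _ _ hs

theorem prod_Iio_sub_dvd_prod_factorial {m : ℕ} {a : Fin m → ℕ} (ha : StrictMono a) :
    ∏ j, ∏ i ∈ Iio j, (a j - a i) ∣ ∏ j, (a j)! := by
  refine prod_dvd_prod_of_dvd _ _ fun j _ => ?_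
  have hinj : Set.InjOn (a j - a ·) (Iio j) := by
    intro i₁ h₁ i₂ h₂ h
    have := ha (mem_Iio.1 h₁)
    have := ha (mem_Iio.1 h₂)
    exact ha.injective (by simp only at h; omega)
  rw [show ∏ i ∈ Iio j, (a j - a i) = ∏ x ∈ (Iio j).image (a j - a ·), x from
    (prod_image (f := fun x => x) hinj).symm]
  refine prod_dvd_factorial_of_subset_Ico fun x hx => ?_
  obtain ⟨i, hi, rfl⟩ := mem_image.1 hx
  have := ha (mem_Iio.1 hi)
  simp only [mem_Ico]
  omega

theorem div_mul_add_of_mod_eq {a k s : ℕ} (h : a % k = s) : a / k * k + s = a := by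
  rw [← h]
  exact Nat.div_add_mod' a k

theorem exists_forall_lt_iff_mul_add_lt {n k s : ℕ} (hk : k ≠ 0) (hs : s < n) :
    ∃ m, ∀ i, i < m ↔ i * k + s < n :=
  ⟨(n - 1 - s) / k + 1, fun i => by
    rw [Nat.lt_succ_iff, Nat.le_div_iff_mul_le (Nat.pos_of_ne_zero hk)]
    omega⟩

def residueClassEquiv {n k s m : ℕ} (hs : s < k) (hm : ∀ i, i < m ↔ i * k + s < n) :
    Fin m ≃ {i : Fin n // (i : ℕ) % k = s} where
  toFun i := ⟨⟨i * k + s, (hm i).1 i.2⟩, by simp [Nat.add_mod, Nat.mod_eq_of_lt hs]⟩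
  invFun i := ⟨(i : ℕ) / k, (hm _).2 <| (div_mul_add_of_mod_eq i.2).symm ▸ i.1.2⟩
  left_inv i := by
    ext
    simp only
    rw [add_comm, Nat.add_mul_div_right _ _ (Nat.zero_lt_of_lt hs), Nat.div_eq_of_lt hs, zero_add]
  right_inv i := Subtype.ext <| Fin.ext <| div_mul_add_of_mod_eq i.2

theorem det_vandermonde_eq_prod_Iio {R : Type*} [CommRing R] {n : ℕ} (v : Fin n → R) :
    (vandermonde v).det = ∏ j, ∏ i ∈ Iio j, (v j - v i) := by
  rw [det_vandermonde]
  exact prod_comm' fun i j => by simp [and_comm]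

theorem prod_Iio_X_sub_X_eq_sum_sign_smul_monomial (R : Type*) [CommRing R] (n : ℕ) :
    ∏ j : Fin n, ∏ i ∈ Iio j, (X j - X i : MvPolynomial (Fin n) R) =
      ∑ σ : Equiv.Perm (Fin n),
        σ.sign • monomial (Finsupp.equivFunOnFinite.symm fun j => (σ j : ℕ)) 1 := by
  rw [← det_vandermonde_eq_prod_Iio, ← det_transpose, det_apply]
  refine sum_congr rfl fun σ _ => ?_
  simp [monomial_eq, Finsupp.prod_fintype, vandermonde_apply]

theorem coeff_mul_prod_Iio_X_sub_X_eq_mul_det {R : Type*} [CommRing R] {n : ℕ}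
    (P : MvPolynomial (Fin n) R) (d : Fin n → ℕ) (c : R) (f : ℕ → R)
    (hP : ∀ σ : Equiv.Perm (Fin n), (∀ j, (σ j : ℕ) ≤ d j) →
      coeff (Finsupp.equivFunOnFinite.symm fun j => d j - σ j) P = c * ∏ j, f (d j - σ j)) :
    coeff (Finsupp.equivFunOnFinite.symm d) (P * ∏ j : Fin n, ∏ i ∈ Iio j, (X j - X i)) =
      c * (of fun i j : Fin n => if (i : ℕ) ≤ d j then f (d j - i) else 0).det := by
  rw [prod_Iio_X_sub_X_eq_sum_sign_smul_monomial, mul_sum, coeff_sum, det_apply, mul_sum]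
  refine sum_congr rfl fun σ _ => ?_
  rw [mul_smul_comm, coeff_smul, coeff_mul_monomial', mul_smul_comm]
  congr 1
  simp only [of_apply, prod_ite_zero, mem_univ, true_implies, mul_one, Finsupp.le_def,
    Finsupp.equivFunOnFinite_symm_apply_apply]
  split_ifs with h
  · rw [← hP σ h]
    congr 1
    ext j
    simp
  · rw [mul_zero]

theorem coeff_sum_X_pow_pow {K σ : Type*} [Field K] [CharZero K] [Fintype σ] {k : ℕ}
    (hk : k ≠ 0) (N : ℕ) (c : σ → ℕ) (hc : ∑ j, c j = k * N) :
    coeff (Finsupp.equivFunOnFinite.symm c) ((∑ j, X j ^ k : MvPolynomial σ K) ^ N) =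
      N ! * ∏ j, if k ∣ c j then ((c j / k)! : K)⁻¹ else 0 := by
  have hexpand : (∑ j, X j ^ k : MvPolynomial σ K) ^ N = expand k ((∑ j, X j) ^ N) := by
    simp [expand_X]
  rw [hexpand]
  by_cases hdvd : ∀ j, k ∣ c j
  · set m : σ →₀ ℕ := Finsupp.equivFunOnFinite.symm fun j => c j / k
    have hm : ∀ j, m j = c j / k := fun j => rfl
    have hcm : Finsupp.equivFunOnFinite.symm c = k • m := by
      ext j
      simp [hm, Nat.mul_div_cancel' (hdvd j)]
    have hmN : ∑ j, m j = N := by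
      refine Nat.eq_of_mul_eq_mul_left (Nat.pos_of_ne_zero hk) ?_
      simp [hm, mul_sum, Nat.mul_div_cancel' (hdvd _), hc]
    rw [hcm, coeff_expand_smul k hk, coeff_sum_X_pow_of_fintype,
      Finsupp.sum_fintype _ _ fun _ => rfl, if_pos hmN,
      Finsupp.multinomial_eq_of_support_subset (subset_univ _)]
    have hspec := Nat.multinomial_spec univ m
    rw [hmN] at hspec
    have hfact : ∏ j, ((c j / k)! : K) ≠ 0 :=
      prod_ne_zero_iff.2 fun j _ => Nat.cast_ne_zero.2 (Nat.factorial_ne_zero _)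
    simp only [hdvd, if_true, ← hspec, hm, Nat.cast_mul, Nat.cast_prod, prod_inv_distrib]
    field_simp
  · push Not at hdvd
    obtain ⟨j, hj⟩ := hdvd
    rw [coeff_expand_of_not_dvd _ (i := j) (by simpa using hj),
      prod_eq_zero (mem_univ j) (if_neg hj), mul_zero]

def invFactorialMatrix (K : Type*) [Field K] {n : ℕ} (k : ℕ) (d : Fin n → ℕ) :
    Matrix (Fin n) (Fin n) K :=
  of fun i j =>
    if (i : ℕ) ≤ d j then (if k ∣ d j - i then (((d j - i) / k)! : K)⁻¹ else 0) else 0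

section invFactorialMatrix

variable {K : Type*} [Field K]

theorem coeff_sum_X_pow_pow_mul_prod_Iio_X_sub_X [CharZero K] {n k : ℕ} (hk : k ≠ 0) (N : ℕ)
    (d : Fin n → ℕ) (hd : ∑ j, d j = k * N + ∑ j : Fin n, (j : ℕ)) :
    coeff (Finsupp.equivFunOnFinite.symm d)
        ((∑ j, X j ^ k : MvPolynomial (Fin n) K) ^ N * ∏ j, ∏ i ∈ Iio j, (X j - X i)) =
      N ! * (invFactorialMatrix K k d).det := by
  refine coeff_mul_prod_Iio_X_sub_X_eq_mul_det _ d (N ! : K)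
    (fun m => if k ∣ m then ((m / k)! : K)⁻¹ else 0) fun σ hσ =>
      coeff_sum_X_pow_pow hk N (fun j => d j - σ j) ?_
  have hperm : ∑ j, (σ j : ℕ) = ∑ j : Fin n, (j : ℕ) := Equiv.sum_comp σ _
  rw [sum_tsub_distrib _ fun j _ => hσ j, hd, hperm, Nat.add_sub_cancel]

theorem det_invFactorialMatrix_one [CharZero K] {m : ℕ} (a : Fin m → ℕ) :
    (invFactorialMatrix K 1 a).det =
      (∏ j, ∏ i ∈ Iio j, ((a j : K) - a i)) / ∏ j, ((a j)! : K) := by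
  have hdesc : (of fun i j : Fin m => ((a j).descFactorial i : K)) =
      of fun i j => ((a j)! : K) * invFactorialMatrix K 1 a i j := by
    ext i j
    by_cases h : (i : ℕ) ≤ a j
    · have hfact : ((a j - i)! : K) ≠ 0 := Nat.cast_ne_zero.2 (Nat.factorial_ne_zero _)
      simp only [invFactorialMatrix, of_apply, if_pos h, one_dvd, if_true, Nat.div_one]
      rw [← Nat.factorial_mul_descFactorial h]
      field_simp
      push_cast
      ring
    · simp [invFactorialMatrix, h, Nat.descFactorial_eq_zero_iff_lt.2 (not_le.1 h)]
  have hvand : (of fun i j : Fin m => ((a j).descFactorial i : K)).det =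
      ∏ j, ∏ i ∈ Iio j, ((a j : K) - a i) := by
    rw [← det_transpose, ← det_vandermonde_eq_prod_Iio,
      det_eval_matrixOfPolynomials_eq_det_vandermonde _ (fun i => descPochhammer K i)
        (fun i => descPochhammer_natDegree K i) (fun i => monic_descPochhammer K i)]
    congr 1
    ext i j
    simp [descPochhammer_eval_eq_descFactorial]
  rw [eq_div_iff (prod_ne_zero_iff.2 fun j _ => Nat.cast_ne_zero.2 (Nat.factorial_ne_zero _)),
    mul_comm, ← det_mul_row, ← hdesc, hvand]

theorem exists_nat_det_invFactorialMatrix_one_mul_eq_one [CharZero K] {m : ℕ} {a : Fin m → ℕ}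
    (ha : StrictMono a) : ∃ T : ℕ, (invFactorialMatrix K 1 a).det * T = 1 := by
  obtain ⟨T, hT⟩ := prod_Iio_sub_dvd_prod_factorial ha
  refine ⟨T, ?_⟩
  have hcast : ∏ j, ∏ i ∈ Iio j, ((a j : K) - a i) =
      ((∏ j, ∏ i ∈ Iio j, (a j - a i) : ℕ) : K) := by
    push_cast
    refine prod_congr rfl fun j _ => prod_congr rfl fun i hi => ?_
    rw [Nat.cast_sub (ha (mem_Iio.1 hi)).le]
  rw [det_invFactorialMatrix_one, hcast, div_mul_eq_mul_div, ← Nat.cast_mul, ← hT,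
    Nat.cast_prod,
    div_self (prod_ne_zero_iff.2 fun j _ => Nat.cast_ne_zero.2 (Nat.factorial_ne_zero _))]

theorem invFactorialMatrix_entry_mul_add {k : ℕ} (hk : k ≠ 0) (E i j s : ℕ) :
    (if i * k + s ≤ k * E + (j * k + s) then
      (if k ∣ k * E + (j * k + s) - (i * k + s) then
        (((k * E + (j * k + s) - (i * k + s)) / k)! : K)⁻¹ else 0) else 0) =
    if i ≤ E + j then (if 1 ∣ E + j - i then (((E + j - i) / 1)! : K)⁻¹ else 0) else 0 := by
  by_cases h : i ≤ E + j
  · have hsub : k * E + (j * k + s) - (i * k + s) = k * (E + j - i) := by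
      zify [h, show i * k + s ≤ k * E + (j * k + s) by nlinarith]
      ring
    rw [if_pos h, if_pos (by nlinarith), hsub, if_pos (dvd_mul_right _ _),
      Nat.mul_div_cancel_left _ (Nat.pos_of_ne_zero hk), if_pos (one_dvd _), Nat.div_one]
  · rw [if_neg h, if_neg]
    intro h'
    exact h (Nat.le_of_mul_le_mul_right (by nlinarith : i * k ≤ (E + j) * k)
      (Nat.pos_of_ne_zero hk))

theorem blockTriangular_invFactorialMatrix_mod {n k : ℕ} (e : ℕ → ℕ) :
    (invFactorialMatrix K k fun j : Fin n => k * e j + j).BlockTriangular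
      (fun i => (i : ℕ) % k) := by
  intro i j hij
  simp only [invFactorialMatrix, of_apply]
  split_ifs with h₁ h₂
  · have hmod : (i : ℕ) % k = (k * e j + j) % k := (Nat.modEq_iff_dvd' h₁).2 h₂
    rw [Nat.mul_add_mod] at hmod
    exact absurd hmod (ne_of_gt hij)
  · rfl
  · rfl

theorem exists_nat_det_invFactorialMatrix_mul_eq_one [CharZero K] {n k : ℕ} (hk : k ≠ 0)
    (e : ℕ → ℕ)
    (he : ∀ s < k, ∀ i j, i < j → j * k + s < n → e (i * k + s) + i < e (j * k + s) + j) :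
    ∃ T : ℕ, (invFactorialMatrix K k fun j : Fin n => k * e j + j).det * T = 1 := by
  rw [(blockTriangular_invFactorialMatrix_mod e).det]
  refine prod_induction _ (fun x : K => ∃ T : ℕ, x * T = 1)
    (fun x y ⟨T, hT⟩ ⟨U, hU⟩ =>
      ⟨T * U, by rw [Nat.cast_mul, mul_mul_mul_comm, hT, hU, one_mul]⟩)
    ⟨1, by simp⟩ fun s hs => ?_
  obtain ⟨i, -, rfl⟩ := mem_image.1 hs
  have hs : (i : ℕ) % k < k := Nat.mod_lt _ (Nat.pos_of_ne_zero hk)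
  obtain ⟨m, hm⟩ := exists_forall_lt_iff_mul_add_lt hk (lt_of_le_of_lt (Nat.mod_le _ _) i.2)
  have hblock : ((invFactorialMatrix K k fun j : Fin n => k * e j + j).toSquareBlock
      (fun i => (i : ℕ) % k) (i % k)).submatrix (residueClassEquiv hs hm)
        (residueClassEquiv hs hm) =
      invFactorialMatrix K 1 fun j : Fin m => e (j * k + i % k) + j := by
    ext j₁ j₂
    exact invFactorialMatrix_entry_mul_add hk _ _ _ _
  rw [← det_submatrix_equiv_self (residueClassEquiv hs hm), hblock]
  exact exists_nat_det_invFactorialMatrix_one_mul_eq_one fun j₁ j₂ h =>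
    he _ hs _ _ h ((hm _).1 j₂.2)

end invFactorialMatrix

theorem exists_nat_coeff_mul_eq_factorial {n k : ℕ} (hk : k ≠ 0) (e : ℕ → ℕ) {N : ℕ}
    (hN : ∑ j : Fin n, e j = N)
    (he : ∀ s < k, ∀ i j, i < j → j * k + s < n → e (i * k + s) + i < e (j * k + s) + j) :
    ∃ T : ℕ, coeff (Finsupp.equivFunOnFinite.symm fun j : Fin n => k * e j + j)
      ((∑ j, X j ^ k) ^ N * ∏ j, ∏ i ∈ Iio j, (X j - X i) : MvPolynomial (Fin n) ℤ) * T =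
        N ! := by
  have hsum : ∑ j : Fin n, (k * e j + j) = k * N + ∑ j : Fin n, (j : ℕ) := by
    rw [sum_add_distrib, ← mul_sum, hN]
  obtain ⟨T, hT⟩ := exists_nat_det_invFactorialMatrix_mul_eq_one (K := ℚ) hk e he
  refine ⟨T, Int.cast_injective (α := ℚ) ?_⟩
  rw [Int.cast_mul, ← eq_intCast (Int.castRingHom ℚ), ← coeff_map]
  simp only [map_mul, map_pow, map_sum, map_prod, map_sub, map_X]
  rw [coeff_sum_X_pow_pow_mul_prod_Iio_X_sub_X hk N _ hsum, mul_assoc]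
  simp [hT]

theorem stmt_2_general (n k : ℕ) (hk1 : 1 ≤ k)
    (q : ℕ → ℕ) (N : ℕ) (hN : N = ∑ i ∈ Finset.Icc 1 n, q i)
    (hmono : ∀ s, 1 ≤ s → s ≤ k → ∀ i j : ℕ, i < j → j * k + s ≤ n →
      q (i * k + s) + i < q (j * k + s) + j) :
    (MvPolynomial.coeff
        (Finsupp.equivFunOnFinite.symm fun j : Fin n => k * q (j.1 + 1) + j.1)
        (((∑ j : Fin n, (X j : MvPolynomial (Fin n) ℤ) ^ k) ^ N) *
          ∏ j : Fin n, ∏ i ∈ Finset.univ.filter (· < j), (X j - X i)) : ℤ) ≠ 0 ∧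
    (MvPolynomial.coeff
        (Finsupp.equivFunOnFinite.symm fun j : Fin n => k * q (j.1 + 1) + j.1)
        (((∑ j : Fin n, (X j : MvPolynomial (Fin n) ℤ) ^ k) ^ N) *
          ∏ j : Fin n, ∏ i ∈ Finset.univ.filter (· < j), (X j - X i)) : ℤ) ∣
      (N.factorial : ℤ) := by
  have hN' : ∑ j : Fin n, q (j + 1) = N := by
    rw [hN, Fin.sum_univ_eq_sum_range (fun j => q (j + 1)), range_eq_Ico, sum_Ico_add' q,
      zero_add, Ico_add_one_right_eq_Icc]
  obtain ⟨T, hT⟩ := exists_nat_coeff_mul_eq_factorial (Nat.one_le_iff_ne_zero.1 hk1)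
    (fun j => q (j + 1)) hN' fun s hs i j hij hj => hmono (s + 1) (by omega) hs i j hij hj
  simp only [filter_gt_eq_Iio]
  refine ⟨fun h0 => N.factorial_ne_zero ?_, ⟨T, hT.symm⟩⟩
  simpa [h0] using hT.symm

theorem stmt_2 (n k : ℕ) (hn : 1 ≤ n) (hk1 : 1 ≤ k) (hkn : k ≤ n)
    (q : ℕ → ℕ) (N : ℕ) (hN : N = ∑ i ∈ Finset.Icc 1 n, q i)
    (hmono : ∀ s, 1 ≤ s → s ≤ k → ∀ i j : ℕ, i < j → j * k + s ≤ n →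
      q (i * k + s) + i < q (j * k + s) + j) :
    (MvPolynomial.coeff
        (Finsupp.equivFunOnFinite.symm fun j : Fin n => k * q (j.1 + 1) + j.1)
        (((∑ j : Fin n, (X j : MvPolynomial (Fin n) ℤ) ^ k) ^ N) *
          ∏ j : Fin n, ∏ i ∈ Finset.univ.filter (· < j), (X j - X i)) : ℤ) ≠ 0 ∧
    (MvPolynomial.coeff
        (Finsupp.equivFunOnFinite.symm fun j : Fin n => k * q (j.1 + 1) + j.1)
        (((∑ j : Fin n, (X j : MvPolynomial (Fin n) ℤ) ^ k) ^ N) *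
          ∏ j : Fin n, ∏ i ∈ Finset.univ.filter (· < j), (X j - X i)) : ℤ) ∣
      (N.factorial : ℤ) :=
  stmt_2_general n k hk1 q N hN hmono
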